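/- The polytope 4P₁ ∩ {0 ≤ x ≤ 2}, i.e., Conv{(0,0,0),(2,0,0),(0,4,0),(0,0,4),(2,2,0),(2,0,2)}, has exactly one interior lattice point, namely (1,1,1), and is normal. -/

import Mathlib

open scoped Pointwise

def IsLatticePt {d : ℕ} (x : Fin d → ℝ) : Prop := ∀ i, ∃ z : ℤ, x i = (z : ℝ)

def IsLatticePolytope {d : ℕ} (P : Set (Fin d → ℝ)) : Prop :=
  ∃ V : Finset (Fin d → ℝ), V.Nonempty ∧ (∀ v ∈ V, IsLatticePt v) ∧ P = convexHull ℝ ↑V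

def IsNormalPolytope {d : ℕ} (P : Set (Fin d → ℝ)) : Prop :=
  ∀ n : ℕ, 1 ≤ n → ∀ x ∈ (n : ℝ) • P, IsLatticePt x →
    ∃ f : Fin n → (Fin d → ℝ), (∀ i, f i ∈ P ∧ IsLatticePt (f i)) ∧ x = ∑ i, f i

def P1 : Set (Fin 3 → ℝ) := convexHull ℝ {![0,0,0], ![1,0,0], ![0,1,0], ![0,0,1]}

def dot2 (x y : Fin 2 → ℝ) : ℝ := ∑ i, x i * y i

def normalCone (P : Set (Fin 2 → ℝ)) (u : Fin 2 → ℝ) : Set (Fin 2 → ℝ) :=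
  {y | ∀ x ∈ P, dot2 x y ≤ dot2 u y}

/-- The normal fan of `A` refines the normal fan of `B`: every normal cone of `A`
is contained in some normal cone of `B`. -/
def FanRefines (A B : Set (Fin 2 → ℝ)) : Prop :=
  ∀ u ∈ A, ∃ v ∈ B, normalCone A u ⊆ normalCone B v

/-- At every vertex the primitive edge directions form a ℤ-basis of ℤ². -/
def IsSmoothPolygon (F : Set (Fin 2 → ℝ)) : Prop :=
  ∀ u ∈ Set.extremePoints ℝ F, ∃ m₁ m₂ : Fin 2 → ℤ,
    (m₁ 0 * m₂ 1 - m₁ 1 * m₂ 0 = 1 ∨ m₁ 0 * m₂ 1 - m₁ 1 * m₂ 0 = -1) ∧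
    {y : Fin 2 → ℝ | ∃ t : ℝ, ∃ x ∈ F, 0 ≤ t ∧ y = t • (x - u)} =
      {y : Fin 2 → ℝ | ∃ a b : ℝ, 0 ≤ a ∧ 0 ≤ b ∧
        y = a • (fun i => (m₁ i : ℝ)) + b • (fun i => (m₂ i : ℝ))}

def emb (v : Fin 2 → ℝ) (t : ℝ) : Fin 3 → ℝ := ![v 0, v 1, t]

def cayley (F G : Set (Fin 2 → ℝ)) : Set (Fin 3 → ℝ) :=
  convexHull ℝ ((fun v => emb v 0) '' F ∪ (fun v => emb v 1) '' G)

/-!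
The polytope is the truncated simplex `{0 ≤ x₀ ≤ 2, 0 ≤ x₁, 0 ≤ x₂, x₀ + x₁ + x₂ ≤ 4}`, and its
interior is cut out by the strict inequalities, which the integers satisfy only at `(1,1,1)`.
For normality, a lattice point of the `(n+1)`-fold dilate splits greedily as a lattice point of
the polytope plus one of the `n`-fold dilate: take as much of `x₀` as the bound `x₀ ≤ 2` allows,
then just enough of `x₁ + x₂` to bring the remainder under the bound `4n`.
-/

open Filter Topology

theorem exists_pos_add_smul_mem_of_mem_interior {E : Type*} [TopologicalSpace E] [AddCommGroup E]
    [Module ℝ E] [ContinuousAdd E] [ContinuousSMul ℝ E] {s : Set E} {x : E}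
    (hx : x ∈ interior s) (v : E) : ∃ t : ℝ, 0 < t ∧ x + t • v ∈ s := by
  have hline : Tendsto (fun t : ℝ => x + t • v) (𝓝 0) (𝓝 x) := by
    simpa using (by fun_prop : Continuous fun t : ℝ => x + t • v).tendsto 0
  have hnear : ∀ᶠ t in 𝓝[>] (0 : ℝ), x + t • v ∈ s :=
    (hline.eventually (mem_interior_iff_mem_nhds.1 hx)).filter_mono nhdsWithin_le_nhds
  obtain ⟨t, hts, ht⟩ := (hnear.and self_mem_nhdsWithin).exists
  exact ⟨t, ht, hts⟩

def truncSimplex {R : Type*} [AddCommMonoid R] [LE R] (k m : R) : Set (Fin 3 → R) :=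
  {x | 0 ≤ x 0 ∧ x 0 ≤ k ∧ 0 ≤ x 1 ∧ 0 ≤ x 2 ∧ x 0 + x 1 + x 2 ≤ m}

theorem IsLatticePt.exists_eq_intCast {d : ℕ} {x : Fin d → ℝ} (hx : IsLatticePt x) :
    ∃ p : Fin d → ℤ, x = fun i => (p i : ℝ) := by
  choose p hp using hx
  exact ⟨p, funext hp⟩

theorem isLatticePt_intCast {d : ℕ} (p : Fin d → ℤ) : IsLatticePt fun i => (p i : ℝ) :=
  fun i => ⟨p i, rfl⟩

theorem intCast_mem_truncSimplex_iff {k m : ℤ} {p : Fin 3 → ℤ} :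
    (fun i => (p i : ℝ)) ∈ truncSimplex (k : ℝ) m ↔ p ∈ truncSimplex k m := by
  simp only [truncSimplex, Set.mem_ofPred_eq]
  norm_cast

theorem convex_truncSimplex (k m : ℝ) : Convex ℝ (truncSimplex k m) := by
  rintro x ⟨hx₀, hx₀', hx₁, hx₂, hx⟩ y ⟨hy₀, hy₀', hy₁, hy₂, hy⟩ a b ha hb hab
  simp only [truncSimplex, Set.mem_ofPred_eq, Pi.add_apply, Pi.smul_apply, smul_eq_mul]
  refine ⟨?_, ?_, ?_, ?_, ?_⟩ <;> nlinarith

theorem smul_truncSimplex_subset {k m t : ℝ} (ht : 0 ≤ t) :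
    t • truncSimplex k m ⊆ truncSimplex (t * k) (t * m) := by
  rintro _ ⟨y, ⟨hy₀, hy₀', hy₁, hy₂, hy⟩, rfl⟩
  simp only [truncSimplex, Set.mem_ofPred_eq, Pi.smul_apply, smul_eq_mul]
  refine ⟨?_, ?_, ?_, ?_, ?_⟩ <;> nlinarith

theorem convexHull_eq_truncSimplex :
    (convexHull ℝ {![0,0,0], ![2,0,0], ![0,4,0], ![0,0,4], ![2,2,0], ![2,0,2]} :
      Set (Fin 3 → ℝ)) = truncSimplex 2 4 := by
  refine subset_antisymm (convexHull_min ?_ (convex_truncSimplex 2 4)) ?_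
  · rintro v (rfl | rfl | rfl | rfl | rfl | rfl) <;>
      norm_num [truncSimplex, Matrix.cons_val_two, Matrix.tail_cons]
  rintro x ⟨hx₀, hx₀', hx₁, hx₂, hx⟩
  have hr : 0 < 4 - x 0 := by linarith
  -- `x` is a convex combination of the two triangles `x₀ = 0` and `x₀ = 2` (weights `μ`), at
  -- the same barycentric coordinates `ν` in both
  set μ : Fin 2 → ℝ := ![1 - x 0 / 2, x 0 / 2]
  set ν : Fin 3 → ℝ := ![(4 - x 0 - x 1 - x 2) / (4 - x 0), x 1 / (4 - x 0), x 2 / (4 - x 0)]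
  set V : Fin 2 → Fin 3 → Fin 3 → ℝ :=
    ![![![0,0,0], ![0,4,0], ![0,0,4]], ![![2,0,0], ![2,2,0], ![2,0,2]]]
  have hμ : ∀ j, 0 ≤ μ j := by
    intro j; fin_cases j
    · show 0 ≤ 1 - x 0 / 2; linarith
    · show 0 ≤ x 0 / 2; linarith
  have hν : ∀ i, 0 ≤ ν i := by
    intro i; fin_cases i <;> refine div_nonneg ?_ hr.le
    · show 0 ≤ 4 - x 0 - x 1 - x 2; linarith
    · exact hx₁
    · exact hx₂
  have hx_eq : x = ∑ j, μ j • ∑ i, ν i • V j i := by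
    ext l
    fin_cases l <;>
      simp only [Fin.zero_eta, Fin.mk_one, Fin.reduceFinMk, μ, ν, V, Fin.sum_univ_two,
        Fin.sum_univ_three, Pi.add_apply, Pi.smul_apply, smul_eq_mul, Matrix.cons_val_zero,
        Matrix.cons_val_one, Matrix.cons_val_two, Matrix.tail_cons, Matrix.head_cons] <;>
      field_simp <;> ring
  rw [hx_eq]
  refine (convex_convexHull ℝ _).sum_mem (fun j _ => hμ j) (by simp [μ]) fun j _ => ?_
  refine (convex_convexHull ℝ _).sum_mem (fun i _ => hν i) ?_ fun i _ => subset_convexHull ℝ _ ?_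
  · simp only [ν, Fin.sum_univ_three, Matrix.cons_val_zero, Matrix.cons_val_one,
      Matrix.cons_val_two, Matrix.tail_cons, Matrix.head_cons]
    field_simp
    ring
  · fin_cases j <;> fin_cases i <;> simp [V]

theorem interior_truncSimplex (k m : ℝ) :
    interior (truncSimplex k m) =
      {x | 0 < x 0 ∧ x 0 < k ∧ 0 < x 1 ∧ 0 < x 2 ∧ x 0 + x 1 + x 2 < m} := by
  refine subset_antisymm (fun x hx => ?_) (interior_maximal (fun x hx => ?_) ?_)
  · have push (v : Fin 3 → ℝ) : ∃ t : ℝ, 0 < t ∧ x + t • v ∈ truncSimplex k m :=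
      exists_pos_add_smul_mem_of_mem_interior hx v
    obtain ⟨t₁, ht₁, h₁, -⟩ := push ![-1, 0, 0]
    obtain ⟨t₂, ht₂, -, h₂, -⟩ := push ![1, 0, 0]
    obtain ⟨t₃, ht₃, -, -, h₃, -⟩ := push ![0, -1, 0]
    obtain ⟨t₄, ht₄, -, -, -, h₄, -⟩ := push ![0, 0, -1]
    obtain ⟨t₅, ht₅, -, -, -, -, h₅⟩ := push ![1, 1, 1]
    simp only [Matrix.smul_cons, smul_eq_mul, Matrix.smul_empty, Pi.add_apply, Matrix.cons_val_zero,
      Matrix.cons_val_one, Matrix.cons_val_two, Matrix.tail_cons, Matrix.head_cons] at h₁ h₂ h₃ h₄ h₅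
    exact ⟨by linarith, by linarith, by linarith, by linarith, by linarith⟩
  · obtain ⟨h₀, h₀', h₁, h₂, h⟩ := hx
    exact ⟨h₀.le, h₀'.le, h₁.le, h₂.le, h.le⟩
  · refine .and (isOpen_lt ?_ ?_) (.and (isOpen_lt ?_ ?_) (.and (isOpen_lt ?_ ?_)
      (.and (isOpen_lt ?_ ?_) (isOpen_lt ?_ ?_)))) <;> fun_prop

theorem exists_add_of_mem_truncSimplex_add {K M k m : ℤ} (hK : 0 ≤ K) (hKM : K ≤ M) (hk : 0 ≤ k)
    (hkm : k ≤ m) {p : Fin 3 → ℤ} (hp : p ∈ truncSimplex (K + k) (M + m)) :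
    ∃ q ∈ truncSimplex k m, p - q ∈ truncSimplex K M := by
  obtain ⟨h₀, h₀', h₁, h₂, h⟩ := hp
  set q₀ := min (p 0) k
  set s := max 0 (p 0 + p 1 + p 2 - M - q₀)
  refine ⟨![q₀, min (p 1) s, s - min (p 1) s], ?_, ?_⟩ <;>
    simp only [truncSimplex, Set.mem_ofPred_eq, Pi.sub_apply, Matrix.cons_val_zero,
      Matrix.cons_val_one, Matrix.cons_val_two, Matrix.tail_cons, Matrix.head_cons] <;>
    omega

theorem exists_sum_eq_of_mem_truncSimplex_nsmul {k m : ℤ} (hk : 0 ≤ k) (hkm : k ≤ m) (n : ℕ)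
    {p : Fin 3 → ℤ} (hp : p ∈ truncSimplex (n * k) (n * m)) :
    ∃ f : Fin n → Fin 3 → ℤ, (∀ i, f i ∈ truncSimplex k m) ∧ p = ∑ i, f i := by
  induction n generalizing p with
  | zero =>
    obtain ⟨h₀, h₀', h₁, h₂, h⟩ := hp
    refine ⟨Fin.elim0, fun i => i.elim0, ?_⟩
    rw [Finset.univ_eq_empty, Finset.sum_empty]
    funext i
    fin_cases i <;> simp only [Fin.zero_eta, Fin.mk_one, Fin.reduceFinMk, Pi.zero_apply] <;> omega
  | succ n ih =>
    push_cast at hp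
    rw [add_one_mul, add_one_mul] at hp
    obtain ⟨q, hq, hpq⟩ := exists_add_of_mem_truncSimplex_add (by positivity)
      (mul_le_mul_of_nonneg_left hkm n.cast_nonneg) hk hkm hp
    obtain ⟨f, hf, hsum⟩ := ih hpq
    refine ⟨Fin.cons q f, Fin.cases hq hf, ?_⟩
    rw [Fin.sum_univ_succ, Fin.cons_zero]
    simp only [Fin.cons_succ, ← hsum, add_sub_cancel]

theorem isNormalPolytope_truncSimplex {k m : ℤ} (hk : 0 ≤ k) (hkm : k ≤ m) :
    IsNormalPolytope (truncSimplex (k : ℝ) m) := by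
  intro n _ x hx hlat
  obtain ⟨p, rfl⟩ := hlat.exists_eq_intCast
  have hp : p ∈ truncSimplex (n * k) (n * m) := by
    rw [← intCast_mem_truncSimplex_iff]
    exact_mod_cast smul_truncSimplex_subset n.cast_nonneg hx
  obtain ⟨f, hf, rfl⟩ := exists_sum_eq_of_mem_truncSimplex_nsmul hk hkm n hp
  refine ⟨fun i j => (f i j : ℝ), fun i => ⟨intCast_mem_truncSimplex_iff.2 (hf i),
    isLatticePt_intCast (f i)⟩, ?_⟩
  ext j
  simp

/-- The anticanonical polytope of Fano class (3) has unique interior lattice point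
(1,1,1) and is normal. -/
theorem stmt16 :
    ({x : Fin 3 → ℝ | x ∈ interior (convexHull ℝ
        {![0,0,0], ![2,0,0], ![0,4,0], ![0,0,4], ![2,2,0], ![2,0,2]} :
        Set (Fin 3 → ℝ)) ∧ IsLatticePt x} = {![1,1,1]}) ∧
    IsNormalPolytope (convexHull ℝ
        {![0,0,0], ![2,0,0], ![0,4,0], ![0,0,4], ![2,2,0], ![2,0,2]} :
        Set (Fin 3 → ℝ)) := by
  rw [convexHull_eq_truncSimplex]
  refine ⟨?_, by
    exact_mod_cast isNormalPolytope_truncSimplex (k := 2) (m := 4) (by norm_num) (by norm_num)⟩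
  rw [interior_truncSimplex]
  ext x
  constructor
  · rintro ⟨hx, hlat⟩
    obtain ⟨p, rfl⟩ := hlat.exists_eq_intCast
    obtain ⟨h₀, h₀', h₁, h₂, h⟩ := hx
    beta_reduce at h₀ h₀' h₁ h₂ h
    norm_cast at h₀ h₀' h₁ h₂ h
    funext i
    fin_cases i <;>
      simp only [Fin.zero_eta, Fin.mk_one, Fin.reduceFinMk, Matrix.cons_val_zero, Matrix.cons_val_one,
        Matrix.cons_val_two, Matrix.tail_cons, Matrix.head_cons, Int.cast_eq_one] <;>
      omega
  · rintro rfl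
    refine ⟨?_, fun i => ⟨1, by fin_cases i <;> simp⟩⟩
    norm_num [Matrix.cons_val_two, Matrix.tail_cons]
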